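/- arXiv:1806.03346 — 2 statements merged into one kernel-verified Lean document; each statement's English description precedes it below -/
import Mathlib

section
/- Σ_{n=1}^∞ (-1)^{n-1} / ((2n−1)(2n+1)(2n+3)(2n+5)) = π/24 − 11/90. -/
open Real Filter Finset Topology

noncomputable def Saux (N : ℕ) : ℝ := ∑ i ∈ Finset.range N, (-1 : ℝ) ^ i / (2 * i + 1)

lemma Saux_succ (N : ℕ) : Saux (N + 1) = Saux N + (-1 : ℝ) ^ N / (2 * N + 1) := by
  simp [Saux, Finset.sum_range_succ]

lemma partial_sum_eq (N : ℕ) :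
    ∑ n ∈ Finset.range N, (-1 : ℝ) ^ n /
        ((2 * (n : ℝ) + 1) * (2 * (n : ℝ) + 3) * (2 * (n : ℝ) + 5) * (2 * (n : ℝ) + 7)) =
      -11 / 90 + (1 / 48) * Saux N + (1 / 16) * Saux (N + 1) + (1 / 16) * Saux (N + 2)
        + (1 / 48) * Saux (N + 3) := by
  induction N with
  | zero =>
    have h0 : Saux 0 = 0 := by simp [Saux]
    have h1 : Saux 1 = 1 := by norm_num [Saux]
    have h2 : Saux 2 = 2 / 3 := by norm_num [Saux, Finset.sum_range_succ]
    have h3 : Saux 3 = 13 / 15 := by norm_num [Saux, Finset.sum_range_succ]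
    simp [h0, h1, h2, h3]
    norm_num
  | succ N ih =>
    rw [Finset.sum_range_succ, ih]
    have e1 := Saux_succ N
    have e2 := Saux_succ (N + 1)
    have e3 := Saux_succ (N + 2)
    have e4 := Saux_succ (N + 3)
    set x : ℝ := (N : ℝ)
    have hx : (0 : ℝ) ≤ x := Nat.cast_nonneg N
    have h1 : (2 * x + 1) ≠ 0 := by positivity
    have h3 : (2 * x + 3) ≠ 0 := by positivity
    have h5 : (2 * x + 5) ≠ 0 := by positivity
    have h7 : (2 * x + 7) ≠ 0 := by positivity
    rw [e4, e3, e2, e1]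
    push_cast [pow_succ] at e1 e2 e3 e4 ⊢
    field_simp
    ring

lemma summable_f : Summable (fun n : ℕ => (-1 : ℝ) ^ n /
    ((2 * (n : ℝ) + 1) * (2 * (n : ℝ) + 3) * (2 * (n : ℝ) + 5) * (2 * (n : ℝ) + 7))) := by
  apply Summable.of_norm
  have hs : Summable (fun n : ℕ => 1 / ((n : ℝ) + 1) ^ 2) := by
    simpa using summable_nat_rpow_inv.mpr (by norm_num : (1:ℝ) < 2) |>.comp_injective
      (add_left_injective 1) |>.congr (fun n => by push_cast; norm_num)
  apply Summable.of_nonneg_of_le (fun n => norm_nonneg _) _ hs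
  intro n
  have hx : (0:ℝ) ≤ (n:ℝ) := Nat.cast_nonneg n
  have hpos : (0:ℝ) < (2 * (n : ℝ) + 1) * (2 * (n : ℝ) + 3) * (2 * (n : ℝ) + 5) * (2 * (n : ℝ) + 7) := by positivity
  rw [norm_div, norm_pow, norm_neg, norm_one, one_pow, one_div, Real.norm_of_nonneg hpos.le, one_div]
  apply inv_anti₀ (by positivity)
  nlinarith [sq_nonneg ((n:ℝ) + 1), sq_nonneg (n:ℝ)]

/-- Σ_{n=1}^∞ (-1)^{n-1} / ((2n−1)(2n+1)(2n+3)(2n+5)) = π/24 − 11/90.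
(The summation index is shifted: `n : ℕ` here corresponds to `n + 1` in the statement.) -/
theorem sum_alt_four_linear_factors :
    ∑' n : ℕ, (-1 : ℝ) ^ n /
        ((2 * (n : ℝ) + 1) * (2 * (n : ℝ) + 3) * (2 * (n : ℝ) + 5) * (2 * (n : ℝ) + 7)) =
      π / 24 - 11 / 90 := by
  have hS : Tendsto Saux atTop (𝓝 (π / 4)) := Real.tendsto_sum_pi_div_four
  have hshift : ∀ k : ℕ, Tendsto (fun N => Saux (N + k)) atTop (𝓝 (π / 4)) :=
    fun k => hS.comp (tendsto_add_atTop_nat k)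
  have hlim : Tendsto (fun N => ∑ n ∈ Finset.range N, (-1 : ℝ) ^ n /
        ((2 * (n : ℝ) + 1) * (2 * (n : ℝ) + 3) * (2 * (n : ℝ) + 5) * (2 * (n : ℝ) + 7)))
      atTop (𝓝 (π / 24 - 11 / 90)) := by
    have : Tendsto (fun N => -11 / 90 + (1 / 48) * Saux N + (1 / 16) * Saux (N + 1)
        + (1 / 16) * Saux (N + 2) + (1 / 48) * Saux (N + 3)) atTop
        (𝓝 (-11 / 90 + (1 / 48) * (π / 4) + (1 / 16) * (π / 4) + (1 / 16) * (π / 4)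
          + (1 / 48) * (π / 4))) := by
      exact ((((tendsto_const_nhds.add (hS.const_mul _)).add ((hshift 1).const_mul _)).add
        ((hshift 2).const_mul _)).add ((hshift 3).const_mul _))
    have heq : (-11 / 90 + (1 / 48) * (π / 4) + (1 / 16) * (π / 4) + (1 / 16) * (π / 4)
        + (1 / 48) * (π / 4)) = π / 24 - 11 / 90 := by ring
    rw [heq] at this
    exact this.congr (fun N => (partial_sum_eq N).symm)
  exact tendsto_nhds_unique summable_f.hasSum.tendsto_sum_nat hlim
end

section
/- The continued fraction with integer part b_0 = 1, partial numerators a_n = (2n−1)^4 for n ≥ 1, and partial denominators b_n = (2n+1)^2 − (2n−1)^2 = 8n for n ≥ 1 converges to 1/G, where G is Catalan's constant; that is, the convergents p_n/q_n defined by p_{-1}=1, q_{-1}=0, p_0=1, q_0=1, p_n = 8n·p_{n-1} + (2n−1)^4 p_{n-2}, q_n = 8n·q_{n-1} + (2n−1)^4 q_{n-2} satisfy lim_{n→∞} p_n/q_n = 1/G. -/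
open Real Filter

private lemma cf_aux_sq : Summable (fun n : ℕ => 1 / ((n : ℝ) + 1) ^ 2) := by
  have h := (Real.summable_one_div_nat_pow (p := 2)).mpr (by norm_num)
  have := h.comp_injective (fun a b (h : a + 1 = b + 1) => by omega : Function.Injective (· + 1))
  simpa [Function.comp_def] using this

private lemma cf_aux_summable : Summable (fun n : ℕ => (-1 : ℝ) ^ n / (2 * (n : ℝ) + 1) ^ 2) := by
  apply Summable.of_abs
  refine cf_aux_sq.of_nonneg_of_le (fun n => abs_nonneg _) (fun n => ?_)
  rw [abs_div, abs_pow, abs_neg, abs_one, one_pow, abs_of_nonneg (by positivity)]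
  apply one_div_le_one_div_of_le (by positivity)
  nlinarith [Nat.cast_nonneg (α := ℝ) n]

private lemma cf_aux_tendsto (G : ℝ)
    (hG : G = ∑' n : ℕ, (-1 : ℝ) ^ n / (2 * (n : ℝ) + 1) ^ 2) :
    Tendsto (fun n : ℕ => ∑ k ∈ Finset.range (n + 1), (-1 : ℝ) ^ k / (2 * (k : ℝ) + 1) ^ 2)
      atTop (nhds G) := by
  have ht : Tendsto (fun n : ℕ => ∑ k ∈ Finset.range n, (-1 : ℝ) ^ k / (2 * (k : ℝ) + 1) ^ 2)
      atTop (nhds G) := by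
    rw [hG]; exact cf_aux_summable.hasSum.tendsto_sum_nat
  exact (Filter.tendsto_add_atTop_iff_nat 1).mpr ht

private lemma cf_aux_Gpos (G : ℝ)
    (hG : G = ∑' n : ℕ, (-1 : ℝ) ^ n / (2 * (n : ℝ) + 1) ^ 2) : 0 < G := by
  set f : ℕ → ℝ := fun n => (-1 : ℝ) ^ n / (2 * (n : ℝ) + 1) ^ 2 with hf
  have ht : Tendsto (fun m : ℕ => ∑ k ∈ Finset.range (2 * m + 1 + 1), f k) atTop (nhds G) :=
    (cf_aux_tendsto G hG).comp
      (Filter.tendsto_atTop_atTop.mpr fun b => ⟨b, fun a ha => by omega⟩)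
  have hmono : Monotone fun m : ℕ => ∑ k ∈ Finset.range (2 * m + 1 + 1), f k := by
    apply monotone_nat_of_le_succ
    intro m
    have e : 2 * (m + 1) + 1 + 1 = (2 * m + 1 + 1) + 1 + 1 := by ring
    rw [e]
    conv_rhs => rw [Finset.sum_range_succ, Finset.sum_range_succ]
    have h1 : f (2 * m + 1 + 1) = 1 / (4 * (m : ℝ) + 5) ^ 2 := by
      rw [hf]; push_cast
      rw [show (-1 : ℝ) ^ (2 * m + 1 + 1) = 1 by
        rw [show 2 * m + 1 + 1 = 2 * (m + 1) by ring, pow_mul]; norm_num]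
      ring_nf
    have h2 : f (2 * m + 1 + 1 + 1) = -(1 / (4 * (m : ℝ) + 7) ^ 2) := by
      rw [hf]; push_cast
      rw [show (-1 : ℝ) ^ (2 * m + 1 + 1 + 1) = -1 by
        rw [show 2 * m + 1 + 1 + 1 = 2 * (m + 1) + 1 by ring, pow_succ, pow_mul]; norm_num]
      ring_nf
    rw [h1, h2]
    have hm : (0:ℝ) ≤ (m:ℝ) := Nat.cast_nonneg m
    have : 1 / (4 * (m : ℝ) + 7) ^ 2 ≤ 1 / (4 * (m : ℝ) + 5) ^ 2 := by
      apply one_div_le_one_div_of_le (by positivity); nlinarith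
    linarith
  have h0 : (∑ k ∈ Finset.range (2 * 0 + 1 + 1), f k) ≤ G := hmono.ge_of_tendsto ht 0
  have : ∑ k ∈ Finset.range (2 * 0 + 1 + 1), f k = 8 / 9 := by
    simp [hf, Finset.sum_range_succ]; norm_num
  rw [this] at h0; linarith

/-- The continued fraction with integer part `b₀ = 1`, partial numerators `aₙ = (2n−1)⁴`
and partial denominators `bₙ = 8n` converges to `1/G`, where
`G = Σ_{n=1}^∞ (-1)^{n-1}/(2n−1)²` is Catalan's constant: the convergents `pₙ/qₙ` given by
`p₋₁ = 1, q₋₁ = 0, p₀ = 1, q₀ = 1`, `pₙ = 8n·pₙ₋₁ + (2n−1)⁴pₙ₋₂`,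
`qₙ = 8n·qₙ₋₁ + (2n−1)⁴qₙ₋₂` tend to `1/G`.
(Indices are shifted by one: `p n` here denotes `p_{n-1}`, so the coefficients
`8(n+1)` and `(2(n+1)−1)⁴ = (2n+1)⁴` appear; the index of the series defining `G` is also
shifted by one.) -/
theorem cf_catalan (G : ℝ)
    (hG : G = ∑' n : ℕ, (-1 : ℝ) ^ n / (2 * (n : ℝ) + 1) ^ 2)
    (p q : ℕ → ℝ)
    (hp0 : p 0 = 1) (hq0 : q 0 = 0) (hp1 : p 1 = 1) (hq1 : q 1 = 1)
    (hp : ∀ n : ℕ,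
      p (n + 2) = 8 * ((n : ℝ) + 1) * p (n + 1) + (2 * (n : ℝ) + 1) ^ 4 * p n)
    (hq : ∀ n : ℕ,
      q (n + 2) = 8 * ((n : ℝ) + 1) * q (n + 1) + (2 * (n : ℝ) + 1) ^ 4 * q n) :
    Tendsto (fun n => p n / q n) atTop (nhds (1 / G)) := by
  set f : ℕ → ℝ := fun n => (-1 : ℝ) ^ n / (2 * (n : ℝ) + 1) ^ 2 with hf
  set S : ℕ → ℝ := fun n => ∑ k ∈ Finset.range (n + 1), f k with hSdef
  set P : ℕ → ℝ := fun n => ∏ k ∈ Finset.range n, (2 * (k : ℝ) + 3) ^ 2 with hPdef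
  have hPpos : ∀ n, 0 < P n := fun n => Finset.prod_pos fun k _ => by positivity
  have hPsucc : ∀ n, P (n + 1) = P n * (2 * (n : ℝ) + 3) ^ 2 := fun n =>
    Finset.prod_range_succ _ n
  have hSsucc : ∀ n, S (n + 1) = S n + (-1 : ℝ) ^ (n + 1) / (2 * (n : ℝ) + 3) ^ 2 := by
    intro n
    rw [hSdef]
    simp only
    rw [Finset.sum_range_succ]
    congr 1
    rw [hf]
    push_cast
    ring
  have key : ∀ n : ℕ, p (n + 1) = P n ∧ q (n + 1) = P n * S n := by
    intro n
    induction n using Nat.twoStepInduction with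
    | zero =>
      refine ⟨by simp [hPdef, hp1], ?_⟩
      rw [hq1, hPdef, hSdef]
      simp [hf]
    | one =>
      have e1 := hp 0
      have e2 := hq 0
      rw [hp0, hp1] at e1
      rw [hq0, hq1] at e2
      constructor
      · rw [e1, hPdef]; norm_num [Finset.prod_range_succ]
      · rw [e2, hPdef, hSdef]
        norm_num [Finset.prod_range_succ, Finset.sum_range_succ, hf]
    | more n ih1 ih2 =>
      have e1 := hp (n + 1)
      have e2 := hq (n + 1)
      push_cast at e1 e2
      rw [ih1.1, ih2.1] at e1
      rw [ih1.2, ih2.2] at e2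
      have hS1 := hSsucc n
      have hS2 := hSsucc (n + 1)
      push_cast at hS1 hS2
      constructor
      · rw [show n + 2 + 1 = n + 1 + 2 by ring, e1, hPsucc (n + 1), hPsucc n]
        push_cast
        ring
      · rw [show n + 2 + 1 = n + 1 + 2 by ring, e2, hPsucc (n + 1), hPsucc n, hS2, hS1]
        push_cast
        rw [pow_succ, pow_succ]
        have hne1 : (2 * (n : ℝ) + 3) ≠ 0 := by positivity
        have hne2 : (2 * ((n : ℝ) + 1) + 3) ≠ 0 := by positivity
        field_simp
        ring
  have hGpos : 0 < G := cf_aux_Gpos G hG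
  have hS : Tendsto S atTop (nhds G) := cf_aux_tendsto G hG
  have h1 : Tendsto (fun n => 1 / S n) atTop (nhds (1 / G)) :=
    tendsto_const_nhds.div hS (ne_of_gt hGpos)
  apply (Filter.tendsto_add_atTop_iff_nat 1).mp
  apply h1.congr
  intro n
  rw [(key n).1, (key n).2, ← div_div, div_self (hPpos n).ne']
end
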